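/- arXiv:2202.00618 — 5 statements merged into one kernel-verified Lean document; each statement's English description precedes it below -/
import Mathlib

section
/- Let λ > 0 and a > 2, and let p_λ be the SCAD penalty. Then the function x ↦ p_λ(|x|) + x²/(2(a−1)) is convex on ℝ. -/
/-!
On `λ < |x| ≤ aλ` the quadratic `x²/(2(a-1))` exactly cancels the concave part of SCAD, and the sum
splits as `λ|x| + (2·huber λ x + (|x| - aλ)₊²) / (2(a-1))`. The absolute value and the squared
hinge are convex by the usual closure properties, and the Huber function is convex because it has
a supporting line `x ↦ u x - u²/2` at every point, with slope `u` the clamp of the point to `[-λ, λ]`.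
-/

/-- The SCAD penalty with regularization parameter `lam` and non-convexity parameter `a`. -/
noncomputable def scad (lam a t : ℝ) : ℝ :=
  if t ≤ lam then lam * t
  else if t ≤ a * lam then -(t ^ 2 - 2 * a * lam * t + lam ^ 2) / (2 * (a - 1))
  else (a + 1) * lam ^ 2 / 2

section Subgradient

variable {𝕜 E : Type*} [Field 𝕜] [LinearOrder 𝕜] [IsStrictOrderedRing 𝕜]
  [AddCommGroup E] [Module 𝕜 E] {s : Set E} {f : E → 𝕜}

theorem convexOn_of_forall_exists_subgradient (hs : Convex 𝕜 s)
    (hf : ∀ z ∈ s, ∃ ℓ : E →ₗ[𝕜] 𝕜, ∀ x ∈ s, f z + ℓ (x - z) ≤ f x) : ConvexOn 𝕜 s f := by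
  refine ⟨hs, fun x hx y hy a b ha hb hab => ?_⟩
  obtain ⟨ℓ, hℓ⟩ := hf _ (hs hx hy ha hb hab)
  have hcancel : a • ℓ (x - (a • x + b • y)) + b • ℓ (y - (a • x + b • y)) = 0 := by
    simp only [map_sub, map_add, map_smul, smul_eq_mul]
    linear_combination (-(a * ℓ x) - b * ℓ y) * hab
  have hx' := mul_le_mul_of_nonneg_left (hℓ x hx) ha
  have hy' := mul_le_mul_of_nonneg_left (hℓ y hy) hb
  simp only [smul_eq_mul] at hcancel ⊢
  linear_combination hx' + hy' - hcancel - f (a • x + b • y) * hab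

end Subgradient

noncomputable def huber (δ x : ℝ) : ℝ :=
  if |x| ≤ δ then x ^ 2 / 2 else δ * (|x| - δ / 2)

theorem mul_sub_sq_div_two_le_huber {δ u : ℝ} (hu : |u| ≤ δ) (x : ℝ) :
    u * x - u ^ 2 / 2 ≤ huber δ x := by
  have hux : u * x ≤ |u| * |x| := (le_abs_self _).trans (abs_mul u x).le
  unfold huber
  split_ifs with hx
  · nlinarith [sq_nonneg (x - u)]
  · nlinarith [sq_abs u, abs_nonneg u]

theorem exists_huber_eq {δ : ℝ} (hδ : 0 ≤ δ) (z : ℝ) :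
    ∃ u, |u| ≤ δ ∧ huber δ z = u * z - u ^ 2 / 2 := by
  by_cases hz : |z| ≤ δ
  · exact ⟨z, hz, by rw [huber, if_pos hz]; ring⟩
  · have hz0 : |z| ≠ 0 := by intro h; rw [h] at hz; exact hz hδ
    refine ⟨δ * z / |z|, ?_, ?_⟩
    · rw [abs_div, abs_mul, abs_abs, abs_of_nonneg hδ, mul_div_assoc, div_self hz0, mul_one]
    · rw [huber, if_neg hz]
      field_simp
      rw [sq_abs]
      ring

theorem convexOn_huber {δ : ℝ} (hδ : 0 ≤ δ) : ConvexOn ℝ Set.univ (huber δ) := by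
  refine convexOn_of_forall_exists_subgradient convex_univ fun z _ => ?_
  obtain ⟨u, hu, hz⟩ := exists_huber_eq hδ z
  refine ⟨u • LinearMap.id, fun x _ => ?_⟩
  simp only [LinearMap.smul_apply, LinearMap.id_apply, smul_eq_mul]
  linarith [mul_sub_sq_div_two_le_huber hu x]

theorem convexOn_sq_max_abs_sub (c : ℝ) :
    ConvexOn ℝ Set.univ (fun x : ℝ => max (|x| - c) 0 ^ 2) := by
  have h : ConvexOn ℝ Set.univ (fun x : ℝ => max (|x| - c) 0) :=
    ((convexOn_univ_norm (E := ℝ)).sub (concaveOn_const c convex_univ)).sup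
      (convexOn_const 0 convex_univ)
  exact h.pow (fun x _ => le_max_right _ _) 2

theorem scad_abs_add_sq_eq {lam a : ℝ} (hlam : 0 ≤ lam) (ha : 1 < a) (x : ℝ) :
    scad lam a |x| + x ^ 2 / (2 * (a - 1)) =
      lam * |x| + (2 * huber lam x + max (|x| - a * lam) 0 ^ 2) / (2 * (a - 1)) := by
  have ha1 : a - 1 ≠ 0 := by linarith
  have hlam_le : lam ≤ a * lam := le_mul_of_one_le_left hlam ha.le
  unfold scad huber
  rw [← sq_abs x]
  split_ifs with h₁ h₂
  · rw [max_eq_right (by linarith)]; field_simp; ring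
  · rw [max_eq_right (by linarith)]; field_simp; ring
  · rw [max_eq_left (by linarith)]; field_simp; ring

/-- Weak convexity of SCAD: `x ↦ p_λ(|x|) + x²/(2(a−1))` is convex on ℝ. -/
theorem scad_weak_convexity (lam a : ℝ) (hlam : 0 < lam) (ha : 2 < a) :
    ConvexOn ℝ Set.univ (fun x : ℝ => scad lam a |x| + x ^ 2 / (2 * (a - 1))) := by
  have hc : 0 ≤ 1 / (2 * (a - 1)) := by
    have : 0 < a - 1 := by linarith
    positivity
  have hconv := ((convexOn_univ_norm (E := ℝ)).smul hlam.le).add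
    ((((convexOn_huber hlam.le).smul zero_le_two).add (convexOn_sq_max_abs_sub (a * lam))).smul hc)
  refine hconv.congr fun x _ => ?_
  simp only [Pi.add_apply, smul_eq_mul, Real.norm_eq_abs]
  rw [scad_abs_add_sq_eq hlam.le (by linarith) x]
  ring
end

section
/- Let λ > 0 and a > 2, and let p_λ be the SCAD penalty. Then for every x ∈ ℝ, λ|x| ≤ p_λ(|x|) + x²/(2(a−1)). -/
theorem mul_le_scad_add_sq_div {lam a : ℝ} (ha : 1 < a) (t : ℝ) :
    lam * t ≤ scad lam a t + t ^ 2 / (2 * (a - 1)) := by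
  have hc : 0 < 2 * (a - 1) := by linarith
  have ha1 : a - 1 ≠ 0 := by linarith
  unfold scad
  split_ifs with h_linear h_concave
  · have := div_nonneg (sq_nonneg t) hc.le
    linarith
  · rw [not_le] at h_linear
    have hlam : 0 < lam := by nlinarith
    have excess : -(t ^ 2 - 2 * a * lam * t + lam ^ 2) / (2 * (a - 1)) + t ^ 2 / (2 * (a - 1))
        - lam * t = lam * (2 * t - lam) / (2 * (a - 1)) := by
      field_simp
      ring
    have := div_nonneg (mul_nonneg hlam.le (by linarith : 0 ≤ 2 * t - lam)) hc.le
    linarith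
  · have excess : (a + 1) * lam ^ 2 / 2 + t ^ 2 / (2 * (a - 1)) - lam * t
        = (t - (a - 1) * lam) ^ 2 / (2 * (a - 1)) + lam ^ 2 := by
      field_simp
      ring
    have : 0 ≤ (t - (a - 1) * lam) ^ 2 / (2 * (a - 1)) + lam ^ 2 := by positivity
    linarith

theorem scad_l1_lower_bound_general (lam a : ℝ) (ha : 2 < a) (x : ℝ) :
    lam * |x| ≤ scad lam a |x| + x ^ 2 / (2 * (a - 1)) := by
  simpa only [sq_abs] using mul_le_scad_add_sq_div (lam := lam) (by linarith : 1 < a) |x|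

/-- Lower bound on SCAD by the ℓ₁ penalty minus a quadratic:
  `λ|x| ≤ p_λ(|x|) + x²/(2(a−1))` for all `x`. -/
theorem scad_l1_lower_bound (lam a : ℝ) (hlam : 0 < lam) (ha : 2 < a) (x : ℝ) :
    lam * |x| ≤ scad lam a |x| + x ^ 2 / (2 * (a - 1)) :=
  scad_l1_lower_bound_general lam a ha x
end

section
/- Let λ > 0 and a > 2, and let p_λ be the SCAD penalty. Then p_λ is subadditive in the sense that for all x, y ∈ ℝ, p_λ(|x + y|) ≤ p_λ(|x|) + p_λ(|y|). -/
open Set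

section

variable {𝕜 : Type*} [Field 𝕜] [LinearOrder 𝕜] [IsStrictOrderedRing 𝕜] {f : 𝕜 → 𝕜}

theorem ConcaveOn.mul_map_le_map_mul (hf : ConcaveOn 𝕜 (Ici 0) f) (h₀ : 0 ≤ f 0) {c x : 𝕜}
    (hc₀ : 0 ≤ c) (hc₁ : c ≤ 1) (hx : 0 ≤ x) : c * f x ≤ f (c * x) := by
  have := hf.2 self_mem_Ici (mem_Ici.2 hx) (sub_nonneg.2 hc₁) hc₀ (sub_add_cancel 1 c)
  simp only [smul_eq_mul, mul_zero, zero_add] at this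
  nlinarith [mul_nonneg (sub_nonneg.2 hc₁) h₀]

theorem ConcaveOn.map_add_le_add (hf : ConcaveOn 𝕜 (Ici 0) f) (h₀ : 0 ≤ f 0) {s t : 𝕜}
    (hs : 0 ≤ s) (ht : 0 ≤ t) : f (s + t) ≤ f s + f t := by
  rcases (add_nonneg hs ht).eq_or_lt with hst | hst
  · obtain ⟨rfl, rfl⟩ : s = 0 ∧ t = 0 := ⟨by linarith, by linarith⟩
    simpa using h₀
  have weight_le_one {u : 𝕜} (hu : u ≤ s + t) : u / (s + t) ≤ 1 := (div_le_one hst).2 hu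
  have hs' := hf.mul_map_le_map_mul h₀ (div_nonneg hs hst.le) (weight_le_one (by linarith)) hst.le
  have ht' := hf.mul_map_le_map_mul h₀ (div_nonneg ht hst.le) (weight_le_one (by linarith)) hst.le
  rw [div_mul_cancel₀ _ hst.ne'] at hs' ht'
  calc f (s + t) = s / (s + t) * f (s + t) + t / (s + t) * f (s + t) := by
        rw [← add_mul, ← add_div, div_self hst.ne', one_mul]
    _ ≤ f s + f t := add_le_add hs' ht'

end

theorem HasDerivAt.ite_le {f g : ℝ → ℝ} {f' c x : ℝ} (hf : x ≤ c → HasDerivAt f f' x)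
    (hg : c ≤ x → HasDerivAt g f' x) (hfg : f c = g c) :
    HasDerivAt (fun t => if t ≤ c then f t else g t) f' x := by
  rcases lt_trichotomy x c with hxc | rfl | hxc
  · refine (hf hxc.le).congr_of_eventuallyEq ?_
    filter_upwards [Iic_mem_nhds hxc] with t ht using if_pos ht
  · rw [← hasDerivWithinAt_univ, ← Iic_union_Ioi]
    refine .union ((hf le_rfl).hasDerivWithinAt.congr (fun t ht => if_pos ht) (if_pos le_rfl))
      ((hg le_rfl).hasDerivWithinAt.congr (fun t ht => if_neg (not_le.2 ht)) ?_)
    rw [if_pos le_rfl, hfg]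
  · refine (hg hxc.le).congr_of_eventuallyEq ?_
    filter_upwards [Ioi_mem_nhds hxc] with t ht using if_neg (not_le.2 ht)

noncomputable def scadDeriv (lam a t : ℝ) : ℝ := max 0 (min lam ((a * lam - t) / (a - 1)))

section

variable {lam a : ℝ}

theorem antitone_scadDeriv (ha : 1 < a) : Antitone (scadDeriv lam a) := fun _ _ hst =>
  max_le_max le_rfl <| min_le_min le_rfl <|
    div_le_div_of_nonneg_right (by linarith) (sub_pos.2 ha).le

theorem scadDeriv_nonneg (t : ℝ) : 0 ≤ scadDeriv lam a t := le_max_left _ _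

theorem scadDeriv_of_le {t : ℝ} (hlam : 0 ≤ lam) (ha : 1 < a) (ht : t ≤ lam) :
    scadDeriv lam a t = lam := by
  have : lam ≤ (a * lam - t) / (a - 1) := by
    rw [le_div_iff₀ (sub_pos.2 ha)]; linarith
  rw [scadDeriv, min_eq_left this, max_eq_right hlam]

theorem scadDeriv_of_mem_Icc {t : ℝ} (ha : 1 < a) (ht : t ∈ Icc lam (a * lam)) :
    scadDeriv lam a t = (a * lam - t) / (a - 1) := by
  have h₀ : 0 ≤ (a * lam - t) / (a - 1) := div_nonneg (by linarith [ht.2]) (sub_pos.2 ha).le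
  have h₁ : (a * lam - t) / (a - 1) ≤ lam := by
    rw [div_le_iff₀ (sub_pos.2 ha)]; linarith [ht.1]
  rw [scadDeriv, min_eq_right h₁, max_eq_right h₀]

theorem scadDeriv_of_mul_le {t : ℝ} (ha : 1 < a) (ht : a * lam ≤ t) : scadDeriv lam a t = 0 := by
  have : (a * lam - t) / (a - 1) ≤ 0 :=
    div_nonpos_of_nonpos_of_nonneg (by linarith) (sub_pos.2 ha).le
  rw [scadDeriv, max_eq_left (min_le_of_right_le this)]

theorem hasDerivAt_scad (hlam : 0 ≤ lam) (ha : 1 < a) (t : ℝ) :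
    HasDerivAt (scad lam a) (scadDeriv lam a t) t := by
  have ha₁ : a - 1 ≠ 0 := (sub_pos.2 ha).ne'
  have hlam_le : lam ≤ a * lam := le_mul_of_one_le_left hlam ha.le
  refine .ite_le (fun ht => ?_) (fun ht => .ite_le (fun ht' => ?_) (fun ht' => ?_) ?_) ?_
  · rw [scadDeriv_of_le hlam ha ht]
    simpa using (hasDerivAt_id t).const_mul lam
  · rw [scadDeriv_of_mem_Icc ha ⟨ht, ht'⟩]
    refine (((((hasDerivAt_id' t).fun_pow 2).fun_sub
      ((hasDerivAt_id' t).const_mul (2 * a * lam))).add_const (lam ^ 2)).fun_neg.div_const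
      (2 * (a - 1))).congr_deriv ?_
    field_simp
    ring
  · rw [scadDeriv_of_mul_le ha ht']
    exact hasDerivAt_const t _
  · field_simp
    ring
  · rw [if_pos hlam_le]
    field_simp
    ring

theorem deriv_scad (hlam : 0 ≤ lam) (ha : 1 < a) : deriv (scad lam a) = scadDeriv lam a :=
  funext fun t => (hasDerivAt_scad hlam ha t).deriv

theorem differentiable_scad (hlam : 0 ≤ lam) (ha : 1 < a) : Differentiable ℝ (scad lam a) :=
  fun t => (hasDerivAt_scad hlam ha t).differentiableAt

theorem concaveOn_scad (hlam : 0 ≤ lam) (ha : 1 < a) : ConcaveOn ℝ univ (scad lam a) :=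
  Antitone.concaveOn_univ_of_deriv (differentiable_scad hlam ha)
    (deriv_scad hlam ha ▸ antitone_scadDeriv ha)

theorem monotone_scad (hlam : 0 ≤ lam) (ha : 1 < a) : Monotone (scad lam a) :=
  monotone_of_deriv_nonneg (differentiable_scad hlam ha)
    (deriv_scad hlam ha ▸ scadDeriv_nonneg)

theorem scad_zero (hlam : 0 ≤ lam) : scad lam a 0 = 0 := by
  rw [scad, if_pos hlam, mul_zero]

theorem scad_add_le (hlam : 0 ≤ lam) (ha : 1 < a) {s t : ℝ} (hs : 0 ≤ s) (ht : 0 ≤ t) :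
    scad lam a (s + t) ≤ scad lam a s + scad lam a t :=
  ((concaveOn_scad hlam ha).subset (subset_univ _) (convex_Ici 0)).map_add_le_add
    (scad_zero hlam).ge hs ht

end

/-- Subadditivity of the SCAD penalty: `p_λ(|x+y|) ≤ p_λ(|x|) + p_λ(|y|)`. -/
theorem scad_subadditive (lam a : ℝ) (hlam : 0 < lam) (ha : 2 < a) (x y : ℝ) :
    scad lam a |x + y| ≤ scad lam a |x| + scad lam a |y| := by
  have ha₁ : 1 < a := by linarith
  calc scad lam a |x + y| ≤ scad lam a (|x| + |y|) := monotone_scad hlam.le ha₁ (abs_add_le x y)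
    _ ≤ scad lam a |x| + scad lam a |y| := scad_add_le hlam.le ha₁ (abs_nonneg x) (abs_nonneg y)
end

section
/- Let α > 0, b > 0, and c > 0, and define f(y) = α b y^{α−1} (1 + c b y^{α})^{−(1/c + 1)} for y > 0. Then both y ↦ log(y) · f(y) and y ↦ (log y)² · f(y) are Lebesgue integrable on (0, ∞). -/
open MeasureTheory

private lemma frailty_aux (α b c : ℝ) (hα : 0 < α) (hb : 0 < b) (hc : 0 < c) (p : ℕ) :
    IntegrableOn
      (fun y : ℝ => (Real.log y) ^ p *
        (α * b * y ^ (α - 1) * (1 + c * b * y ^ α) ^ (-(1 / c + 1))))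
      (Set.Ioi (0 : ℝ)) := by
  have hmeas : Measurable (fun y : ℝ => (Real.log y) ^ p *
      (α * b * y ^ (α - 1) * (1 + c * b * y ^ α) ^ (-(1 / c + 1)))) := by
    measurability
  have hs : (0:ℝ) ≤ 1 / c + 1 := by positivity
  have hP : (0:ℝ) ≤ (p:ℝ) := Nat.cast_nonneg p
  rw [show Set.Ioi (0:ℝ) = Set.Ioc 0 1 ∪ Set.Ioi 1 from
    (Set.Ioc_union_Ioi_eq_Ioi zero_le_one).symm]
  apply IntegrableOn.union
  · -- on (0,1]
    set ε : ℝ := α / (2 * (p + 1)) with hεdef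
    have hε : 0 < ε := by positivity
    have hexp : -1 < α - 1 - p * ε := by
      have h1 : (p:ℝ) * ε < α := by
        calc (p:ℝ) * ε = α * ((p:ℝ) / (2 * ((p:ℝ) + 1))) := by rw [hεdef]; ring
          _ < α * 1 := by
              refine mul_lt_mul_of_pos_left ?_ hα
              rw [div_lt_one (by positivity)]; linarith
          _ = α := mul_one α
      linarith
    apply Integrable.mono' (g := fun y : ℝ => (α * b / ε ^ p) * y ^ (α - 1 - p * ε))
    · exact ((intervalIntegral.intervalIntegrable_rpow' hexp).1).const_mul _
    · exact hmeas.aestronglyMeasurable.restrict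
    · filter_upwards [ae_restrict_mem measurableSet_Ioc] with y hy
      obtain ⟨hy0, hy1⟩ := hy
      have hyα : (0:ℝ) ≤ y ^ α := Real.rpow_nonneg hy0.le α
      have hcb : (0:ℝ) ≤ c * b * y ^ α := mul_nonneg (mul_nonneg hc.le hb.le) hyα
      have hbase : (0:ℝ) ≤ 1 + c * b * y ^ α := by linarith
      have hF : 0 ≤ α * b * y ^ (α - 1) * (1 + c * b * y ^ α) ^ (-(1 / c + 1)) :=
        mul_nonneg (mul_nonneg (by positivity) (Real.rpow_nonneg hy0.le _))
          (Real.rpow_nonneg hbase _)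
      have hlog : |Real.log y| ≤ y ^ (-ε) / ε := by
        rw [abs_of_nonpos (Real.log_nonpos hy0.le hy1)]
        have h := Real.log_le_rpow_div (x := y⁻¹) (inv_nonneg.2 hy0.le) hε
        rw [Real.log_inv, Real.inv_rpow hy0.le, ← Real.rpow_neg hy0.le] at h
        linarith
      have hlogp : |Real.log y| ^ p ≤ y ^ (-(p * ε)) / ε ^ p := by
        calc |Real.log y| ^ p ≤ (y ^ (-ε) / ε) ^ p :=
              pow_le_pow_left₀ (abs_nonneg _) hlog p
          _ = (y ^ (-ε)) ^ p / ε ^ p := div_pow _ _ p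
          _ = y ^ (-(p * ε)) / ε ^ p := by
              rw [← Real.rpow_natCast (y ^ (-ε)) p, ← Real.rpow_mul hy0.le]
              ring_nf
      have hFb : α * b * y ^ (α - 1) * (1 + c * b * y ^ α) ^ (-(1 / c + 1)) ≤
          α * b * y ^ (α - 1) := by
        have h1 : (1 + c * b * y ^ α) ^ (-(1 / c + 1)) ≤ 1 :=
          Real.rpow_le_one_of_one_le_of_nonpos (by linarith) (by linarith)
        have h2 : 0 ≤ α * b * y ^ (α - 1) :=
          mul_nonneg (by positivity) (Real.rpow_nonneg hy0.le _)
        simpa using mul_le_mul_of_nonneg_left h1 h2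
      rw [norm_mul, norm_pow, Real.norm_eq_abs, Real.norm_eq_abs, abs_of_nonneg hF]
      calc |Real.log y| ^ p * (α * b * y ^ (α - 1) * (1 + c * b * y ^ α) ^ (-(1 / c + 1)))
          ≤ (y ^ (-(p * ε)) / ε ^ p) * (α * b * y ^ (α - 1)) :=
            mul_le_mul hlogp hFb hF
              (div_nonneg (Real.rpow_nonneg hy0.le _) (by positivity))
        _ = (α * b / ε ^ p) * (y ^ (-(p * ε)) * y ^ (α - 1)) := by ring
        _ = (α * b / ε ^ p) * y ^ (α - 1 - p * ε) := by
            rw [← Real.rpow_add hy0]; ring_nf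
  · -- on (1,∞)
    set ε : ℝ := α / (c * (p + 1)) with hεdef
    have hε : 0 < ε := by positivity
    have hexp : α - 1 + α * (-(1 / c + 1)) + p * ε < -1 := by
      have hαc : 0 < α / c := by positivity
      have h1 : (p:ℝ) * ε < α / c := by
        calc (p:ℝ) * ε = (α / c) * ((p:ℝ) / ((p:ℝ) + 1)) := by
              rw [hεdef, div_mul_eq_div_div]; ring
          _ < (α / c) * 1 := by
              refine mul_lt_mul_of_pos_left ?_ hαc
              rw [div_lt_one (by positivity)]; linarith
          _ = α / c := mul_one _
      have h2 : α * (-(1 / c + 1)) = -(α / c) - α := by field_simp; ring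
      linarith
    apply Integrable.mono'
      (g := fun y : ℝ => (α * b * (c * b) ^ (-(1 / c + 1)) / ε ^ p) *
        y ^ (α - 1 + α * (-(1 / c + 1)) + p * ε))
    · exact (integrableOn_Ioi_rpow_of_lt hexp one_pos).const_mul _
    · exact hmeas.aestronglyMeasurable.restrict
    · filter_upwards [ae_restrict_mem measurableSet_Ioi] with y hy
      have hy0 : (0:ℝ) < y := lt_trans one_pos hy
      have hy1 : (1:ℝ) < y := hy
      have hyα : (0:ℝ) < y ^ α := Real.rpow_pos_of_pos hy0 α
      have hcb : (0:ℝ) < c * b * y ^ α := mul_pos (mul_pos hc hb) hyα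
      have hbase : (0:ℝ) < 1 + c * b * y ^ α := by linarith
      have hF : 0 ≤ α * b * y ^ (α - 1) * (1 + c * b * y ^ α) ^ (-(1 / c + 1)) :=
        mul_nonneg (mul_nonneg (by positivity) (Real.rpow_nonneg hy0.le _))
          (Real.rpow_nonneg hbase.le _)
      have hlog : |Real.log y| ≤ y ^ ε / ε := by
        rw [abs_of_nonneg (Real.log_nonneg hy1.le)]
        exact Real.log_le_rpow_div hy0.le hε
      have hlogp : |Real.log y| ^ p ≤ y ^ ((p:ℝ) * ε) / ε ^ p := by
        calc |Real.log y| ^ p ≤ (y ^ ε / ε) ^ p :=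
              pow_le_pow_left₀ (abs_nonneg _) hlog p
          _ = (y ^ ε) ^ p / ε ^ p := div_pow _ _ p
          _ = y ^ ((p:ℝ) * ε) / ε ^ p := by
              rw [← Real.rpow_natCast (y ^ ε) p, ← Real.rpow_mul hy0.le]
              ring_nf
      have htail : (1 + c * b * y ^ α) ^ (-(1 / c + 1)) ≤
          (c * b) ^ (-(1 / c + 1)) * y ^ (α * (-(1 / c + 1))) := by
        have h1 : (1 + c * b * y ^ α) ^ (-(1 / c + 1)) ≤
            (c * b * y ^ α) ^ (-(1 / c + 1)) :=
          Real.rpow_le_rpow_of_nonpos hcb (by linarith) (by linarith)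
        have h2 : (c * b * y ^ α) ^ (-(1 / c + 1)) =
            (c * b) ^ (-(1 / c + 1)) * y ^ (α * (-(1 / c + 1))) := by
          rw [Real.mul_rpow (by positivity) hyα.le, Real.rpow_mul hy0.le]
        exact h2 ▸ h1
      have hFb : α * b * y ^ (α - 1) * (1 + c * b * y ^ α) ^ (-(1 / c + 1)) ≤
          α * b * y ^ (α - 1) * ((c * b) ^ (-(1 / c + 1)) * y ^ (α * (-(1 / c + 1)))) := by
        have h2 : 0 ≤ α * b * y ^ (α - 1) :=
          mul_nonneg (by positivity) (Real.rpow_nonneg hy0.le _)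
        exact mul_le_mul_of_nonneg_left htail h2
      rw [norm_mul, norm_pow, Real.norm_eq_abs, Real.norm_eq_abs, abs_of_nonneg hF]
      calc |Real.log y| ^ p * (α * b * y ^ (α - 1) * (1 + c * b * y ^ α) ^ (-(1 / c + 1)))
          ≤ (y ^ ((p:ℝ) * ε) / ε ^ p) *
            (α * b * y ^ (α - 1) * ((c * b) ^ (-(1 / c + 1)) * y ^ (α * (-(1 / c + 1))))) :=
            mul_le_mul hlogp hFb hF
              (div_nonneg (Real.rpow_nonneg hy0.le _) (by positivity))
        _ = (α * b * (c * b) ^ (-(1 / c + 1)) / ε ^ p) *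
            (y ^ (α - 1) * y ^ (α * (-(1 / c + 1))) * y ^ ((p:ℝ) * ε)) := by ring
        _ = (α * b * (c * b) ^ (-(1 / c + 1)) / ε ^ p) *
            y ^ (α - 1 + α * (-(1 / c + 1)) + p * ε) := by
            rw [← Real.rpow_add hy0, ← Real.rpow_add hy0]

/-- Finiteness of the first and second moments of `log Y` under the
  conditional density `f(y) = α b y^{α−1}(1+cby^α)^{−(1/c+1)}` of the observed
  non-terminal event time in the gamma-frailty illness-death model with
  Weibull baseline hazards. -/
theorem frailty_weibull_log_moments_integrable (α b c : ℝ)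
    (hα : 0 < α) (hb : 0 < b) (hc : 0 < c) :
    IntegrableOn
        (fun y : ℝ => Real.log y *
          (α * b * y ^ (α - 1) * (1 + c * b * y ^ α) ^ (-(1 / c + 1))))
        (Set.Ioi (0 : ℝ)) ∧
      IntegrableOn
        (fun y : ℝ => (Real.log y) ^ 2 *
          (α * b * y ^ (α - 1) * (1 + c * b * y ^ α) ^ (-(1 / c + 1))))
        (Set.Ioi (0 : ℝ)) := by
  constructor
  · simpa [pow_one] using frailty_aux α b c hα hb hc 1
  · exact frailty_aux α b c hα hb hc 2
end

section
/- Let p ≥ 1, let f : ℝ^p → ℝ be twice continuously differentiable, let ρ > 0, ε ≥ 0, and let x, ν ∈ ℝ^p. Suppose that for every u ∈ [0, 1] the Hessian matrix ∇²f(x + uν) can be written as ∇²f(x + uν) = Σ(u) + G(u), where Σ(u) and G(u) are p × p matrices satisfying νᵀ Σ(u) ν ≥ ρ ‖ν‖₂² and max_{j,l} |G(u)_{jl}| ≤ ε. Then ⟨∇f(x + ν) − ∇f(x), ν⟩ ≥ ρ ‖ν‖₂² − ε ‖ν‖₁². -/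
open scoped RealInnerProductSpace

/-!
By the mean value theorem for `t ↦ Df(x + tν) ν` on `[0, 1]`, the left-hand side equals the
Hessian quadratic form `νᵀ ∇²f(x + cν) ν` at some intermediate point. Splitting the Hessian as
`Σ(c) + G(c)`, the `Σ` part is at least `ρ‖ν‖₂²`, and the `G` part is at least `-ε‖ν‖₁²` because
every entry of `G(c)` is bounded by `ε`.
-/

theorem abs_sum_sum_mul_mul_le_of_abs_le {m n : Type*} [Fintype m] [Fintype n]
    {G : Matrix m n ℝ} {ε : ℝ} (hG : ∀ j l, |G j l| ≤ ε) (a : m → ℝ) (b : n → ℝ) :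
    |∑ j, ∑ l, a j * G j l * b l| ≤ ε * (∑ j, |a j|) * ∑ l, |b l| :=
  calc |∑ j, ∑ l, a j * G j l * b l|
      ≤ ∑ j, ∑ l, |a j * G j l * b l| :=
        (Finset.abs_sum_le_sum_abs _ _).trans
          (Finset.sum_le_sum fun j _ => Finset.abs_sum_le_sum_abs _ _)
    _ ≤ ∑ j, ∑ l, |a j| * ε * |b l| := by
        gcongr with j _ l _
        rw [abs_mul, abs_mul]
        gcongr
        exact hG j l
    _ = ε * (∑ j, |a j|) * ∑ l, |b l| := by
        rw [mul_assoc, Finset.sum_mul_sum, Finset.mul_sum]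
        refine Finset.sum_congr rfl fun j _ => ?_
        rw [Finset.mul_sum]
        exact Finset.sum_congr rfl fun l _ => by ring

section SecondDerivativeAlongLine

variable {E : Type*} [NormedAddCommGroup E] [NormedSpace ℝ E] {f : E → ℝ}

theorem ContDiff.hasDerivAt_fderiv_add_smul_apply (hf : ContDiff ℝ 2 f) (x v : E) (t : ℝ) :
    HasDerivAt (fun s : ℝ => fderiv ℝ f (x + s • v) v)
      (iteratedFDeriv ℝ 2 f (x + t • v) ![v, v]) t := by
  have hf' : Differentiable ℝ (fderiv ℝ f) :=
    (hf.fderiv_right (m := 1) le_rfl).differentiable one_ne_zero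
  have hline : HasDerivAt (fun s : ℝ => x + s • v) v t := by
    simpa using ((hasDerivAt_id t).smul_const v).const_add x
  rw [iteratedFDeriv_two_apply]
  simpa using ((hf' _).hasFDerivAt.comp_hasDerivAt t hline).clm_apply (hasDerivAt_const t v)

theorem ContDiff.exists_mem_Ioo_fderiv_sub_eq_iteratedFDeriv_two (hf : ContDiff ℝ 2 f) (x v : E) :
    ∃ c ∈ Set.Ioo (0 : ℝ) 1,
      fderiv ℝ f (x + v) v - fderiv ℝ f x v = iteratedFDeriv ℝ 2 f (x + c • v) ![v, v] := by
  have hderiv := hf.hasDerivAt_fderiv_add_smul_apply x v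
  obtain ⟨c, hc, hslope⟩ := exists_hasDerivAt_eq_slope _ _ one_pos
    (fun t _ => (hderiv t).continuousAt.continuousWithinAt) (fun t _ => hderiv t)
  refine ⟨c, hc, ?_⟩
  simpa using hslope.symm

end SecondDerivativeAlongLine

theorem restricted_strong_convexity_core_general (p : ℕ)
    (f : EuclideanSpace ℝ (Fin p) → ℝ) (hf : ContDiff ℝ 2 f)
    (ρ ε : ℝ)
    (x ν : EuclideanSpace ℝ (Fin p))
    (S G : ℝ → Matrix (Fin p) (Fin p) ℝ)
    (hdecomp : ∀ u ∈ Set.Icc (0 : ℝ) 1, ∀ a b : EuclideanSpace ℝ (Fin p),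
      iteratedFDeriv ℝ 2 f (x + u • ν) ![a, b] =
        ∑ j, ∑ l, a j * (S u j l + G u j l) * b l)
    (hS : ∀ u ∈ Set.Icc (0 : ℝ) 1,
      ρ * ∑ j, (ν j) ^ 2 ≤ ∑ j, ∑ l, ν j * S u j l * ν l)
    (hG : ∀ u ∈ Set.Icc (0 : ℝ) 1, ∀ j l, |G u j l| ≤ ε) :
    ρ * (∑ j, (ν j) ^ 2) - ε * (∑ j, |ν j|) ^ 2 ≤
      ⟪gradient f (x + ν) - gradient f x, ν⟫ := by
  obtain ⟨c, hc, hmvt⟩ := hf.exists_mem_Ioo_fderiv_sub_eq_iteratedFDeriv_two x ν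
  have hcI : c ∈ Set.Icc (0 : ℝ) 1 := Set.Ioo_subset_Icc_self hc
  have hGc := abs_le.1 (abs_sum_sum_mul_mul_le_of_abs_le (hG c hcI) ν ν)
  rw [inner_sub_left, inner_gradient_left, inner_gradient_left, hmvt, hdecomp c hcI]
  simp only [mul_add, add_mul, Finset.sum_add_distrib]
  linarith [hS c hcI, hGc.1]

/-- Deterministic core of the restricted strong convexity lemma: if along the
  segment from `x` to `x+ν` the Hessian decomposes as `Σ(u) + G(u)` with
  `νᵀΣ(u)ν ≥ ρ‖ν‖₂²` and `‖G(u)‖_max ≤ ε`, then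
  `⟨∇f(x+ν) − ∇f(x), ν⟩ ≥ ρ‖ν‖₂² − ε‖ν‖₁²`. -/
theorem restricted_strong_convexity_core (p : ℕ) (hp : 1 ≤ p)
    (f : EuclideanSpace ℝ (Fin p) → ℝ) (hf : ContDiff ℝ 2 f)
    (ρ ε : ℝ) (hρ : 0 < ρ) (hε : 0 ≤ ε)
    (x ν : EuclideanSpace ℝ (Fin p))
    (S G : ℝ → Matrix (Fin p) (Fin p) ℝ)
    (hdecomp : ∀ u ∈ Set.Icc (0 : ℝ) 1, ∀ a b : EuclideanSpace ℝ (Fin p),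
      iteratedFDeriv ℝ 2 f (x + u • ν) ![a, b] =
        ∑ j, ∑ l, a j * (S u j l + G u j l) * b l)
    (hS : ∀ u ∈ Set.Icc (0 : ℝ) 1,
      ρ * ∑ j, (ν j) ^ 2 ≤ ∑ j, ∑ l, ν j * S u j l * ν l)
    (hG : ∀ u ∈ Set.Icc (0 : ℝ) 1, ∀ j l, |G u j l| ≤ ε) :
    ρ * (∑ j, (ν j) ^ 2) - ε * (∑ j, |ν j|) ^ 2 ≤
      ⟪gradient f (x + ν) - gradient f x, ν⟫ :=
  restricted_strong_convexity_core_general p f hf ρ ε x ν S G hdecomp hS hG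
end
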